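/- arXiv:1003.0072 — 5 statements merged into one kernel-verified Lean document; each statement's English description precedes it below -/
import Mathlib

section
/- Let a(n) be defined by the formal power series identity ∑_{n≥0} a(n) qⁿ = ∏_{n≥1} 1/((1 - q^{3n})(1 - qⁿ)³). If a(m) ≡ 0 (mod 625) for all m with m ≡ 13, 22, 31, or 40 (mod 45), and cφ̄3(n) is defined by ∑_{n≥0} cφ̄3(n) qⁿ = 9q ∏_{n≥1} (1-q^{9n})³/((1-q^{3n})(1-qⁿ)³), then cφ̄3(45n+23) ≡ 0 (mod 625) for all n ≥ 0. -/
/-!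
Combining the two defining identities gives `∑ cφ̄3(m) qᵐ = 9q (q⁹; q⁹)³_∞ ∑ a(m) qᵐ`, hence
`cφ̄3(45n+23) = 9 ∑ₛ r(s) a(45n+22-9s)`, where `r(s)` is the coefficient of `qˢ` in `(q; q)³_∞`.
By Jacobi's identity `(q; q)³_∞ = ∑ₖ (-1)ᵏ (2k+1) q^{k(k+1)/2}`, `r(s) = 0` unless `s` is a
triangular number, and triangular numbers are `≢ 2 (mod 5)`. For the other residues of `s` mod 5,
`45n+22-9s ≡ 22, 13, 40, 31 (mod 45)`, so `625 ∣ a(45n+22-9s)`.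

Jacobi's identity is only needed modulo `q^{N+1}`, where it holds for the finite product
`(q; q)_N`. Differentiating the finite triple product
`(z-1) ∏_{j≤N} (z-q^j)(1-zq^j) = ∑_{i≤N} (-1)^i [2N+1, N-i]_q q^{i(i+1)/2} (z^{N+1+i} - z^{N-i})`
at `z = 1` gives `(q; q)_N² = ∑_{i≤N} (-1)^i (2i+1) [2N+1, N-i]_q q^{i(i+1)/2}`, and
`(q; q)_N [2N+1, N-i]_q ≡ 1 (mod q^{N-i+1})`.
-/

open Finset

def triangle : ℕ → ℕ
  | 0 => 0
  | k + 1 => triangle k + (k + 1)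

theorem two_mul_triangle (k : ℕ) : 2 * triangle k = k * (k + 1) := by
  induction k with
  | zero => rfl
  | succ k ih => rw [triangle, mul_add, ih]; ring

theorem le_triangle (k : ℕ) : k ≤ triangle k := by
  nlinarith [two_mul_triangle k]

theorem triangle_mod_five_ne_two (k : ℕ) : triangle k % 5 ≠ 2 := by
  intro h5
  have hm : 2 * triangle k % 5 = k * (k + 1) % 5 := by rw [two_mul_triangle]
  rw [Nat.mul_mod 2, h5, Nat.mul_mod k, Nat.add_mod k] at hm
  have : k % 5 < 5 := Nat.mod_lt _ (by norm_num)
  interval_cases k % 5 <;> omega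

theorem sum_range_add_add_shift {M : Type*} [AddCommMonoid M] (f g h : ℕ → M) {n : ℕ}
    (hf : f (n + 1) = 0) (hh₀ : h n = 0) (hh₁ : h (n + 1) = 0) :
    ∑ i ∈ range (n + 2), (f i + g i + h i) =
      f 0 + g 1 + g 0 + ∑ i ∈ range n, (f (i + 1) + g (i + 2) + h i) := by
  rw [sum_add_distrib, sum_add_distrib, sum_add_distrib, sum_add_distrib, sum_range_succ f, hf,
    add_zero, sum_range_succ', sum_range_succ' g, sum_range_succ' (fun i => g (i + 1)),
    sum_range_succ h, sum_range_succ h, hh₀, hh₁]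
  abel

namespace Polynomial

theorem eval_one_derivative_X_sub_one_mul {A : Type*} [CommRing A] (p : A[X]) :
    (derivative ((X - 1) * p)).eval 1 = p.eval 1 := by
  simp

end Polynomial

section FiniteTripleProduct

open Polynomial

variable {A : Type*} [CommRing A] (q : A)

def qPochhammer (n : ℕ) : A := ∏ j ∈ Ioc 0 n, (1 - q ^ j)

@[simp]
theorem qPochhammer_zero : qPochhammer q 0 = 1 := rfl

theorem qPochhammer_succ (n : ℕ) :
    qPochhammer q (n + 1) = qPochhammer q n * (1 - q ^ (n + 1)) :=
  prod_Ioc_succ_top (Nat.zero_le n) _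

theorem qPochhammer_add_two (n : ℕ) :
    qPochhammer q (n + 2) = qPochhammer q n * (1 - q ^ (n + 1)) * (1 - q ^ (n + 2)) := by
  rw [qPochhammer_succ, qPochhammer_succ]

theorem qPochhammer_mul_prod_Ioc {m n : ℕ} (h : m ≤ n) :
    qPochhammer q m * ∏ j ∈ Ioc m n, (1 - q ^ j) = qPochhammer q n :=
  prod_Ioc_consecutive _ (Nat.zero_le m) h

/-- The Gaussian binomial `[2n+1, n-i]_q` (see `qBinomCentral_mul_qPochhammer`), defined by the
recursion that `tripleProductSum_mul` needs. At `i = 0` the truncated `i - 1 = 0` is intended: it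
is the reflection `i ↦ -1-i` of the triple product. -/
def qBinomCentral : ℕ → ℕ → A
  | 0, i => if i = 0 then 1 else 0
  | n + 1, i => (1 + q ^ (2 * n + 2)) * qBinomCentral n i
      + q ^ (n + 1 - i) * qBinomCentral n (i - 1) + q ^ (n + 2 + i) * qBinomCentral n (i + 1)

theorem qBinomCentral_of_lt {n i : ℕ} (h : n < i) : qBinomCentral q n i = 0 := by
  induction n generalizing i with
  | zero => simp [qBinomCentral, Nat.pos_iff_ne_zero.mp h]
  | succ n ih =>
    simp [qBinomCentral, ih (by omega : n < i), ih (by omega : n < i - 1),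
      ih (by omega : n < i + 1)]

@[simp]
theorem qBinomCentral_self (n : ℕ) : qBinomCentral q n n = 1 := by
  induction n with
  | zero => simp [qBinomCentral]
  | succ n ih =>
    simp [qBinomCentral, ih, qBinomCentral_of_lt q (Nat.lt_succ_self n),
      qBinomCentral_of_lt q (by omega : n < n + 2)]

noncomputable def tripleProductFactor (j : ℕ) : A[X] :=
  (X - C (q ^ j)) * (1 - C (q ^ j) * X)

noncomputable def tripleProductTerm (n i : ℕ) (a : A) : A[X] :=
  C ((-1) ^ i * a * q ^ triangle i) *
    (X ^ (n + 1 + i) - X ^ (n - i))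

noncomputable def tripleProductSum (n : ℕ) : A[X] :=
  ∑ i ∈ range (n + 1), tripleProductTerm q n i (qBinomCentral q n i)

theorem tripleProductTerm_add (n i : ℕ) (a b : A) :
    tripleProductTerm q n i (a + b) = tripleProductTerm q n i a + tripleProductTerm q n i b := by
  simp only [tripleProductTerm, mul_add, add_mul, map_add]

@[simp]
theorem tripleProductTerm_zero (n i : ℕ) : tripleProductTerm q n i 0 = 0 := by
  simp [tripleProductTerm]

theorem tripleProductTerm_zero_mul (n : ℕ) (a : A) :
    tripleProductTerm q n 0 a * tripleProductFactor q (n + 1) =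
      tripleProductTerm q (n + 1) 0 ((1 + q ^ (2 * n + 2)) * a) +
      tripleProductTerm q (n + 1) 1 (q ^ n * a) +
      tripleProductTerm q (n + 1) 0 (q ^ (n + 1) * a) := by
  simp only [tripleProductTerm, tripleProductFactor, triangle, Nat.sub_zero, Nat.add_sub_cancel,
    map_mul, map_pow, map_add, map_one, map_neg]
  ring

theorem tripleProductTerm_succ_mul {n i : ℕ} (h : i < n) (a : A) :
    tripleProductTerm q n (i + 1) a * tripleProductFactor q (n + 1) =
      tripleProductTerm q (n + 1) (i + 1) ((1 + q ^ (2 * n + 2)) * a) +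
      tripleProductTerm q (n + 1) (i + 2) (q ^ (n - (i + 1)) * a) +
      tripleProductTerm q (n + 1) i (q ^ (n + 2 + i) * a) := by
  obtain ⟨d, rfl⟩ : ∃ d, n = i + 1 + d := ⟨n - (i + 1), by omega⟩
  simp only [tripleProductTerm, tripleProductFactor, triangle, map_mul, map_pow, map_add, map_one,
    map_neg, show i + 1 + d - (i + 1) = d by omega, show i + 1 + d + 1 - (i + 1) = d + 1 by omega,
    show i + 1 + d + 1 - (i + 2) = d by omega, show i + 1 + d + 1 - i = d + 2 by omega]
  ring

theorem tripleProductSum_mul (n : ℕ) :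
    tripleProductSum q n * tripleProductFactor q (n + 1) = tripleProductSum q (n + 1) := by
  have hc : ∀ {i}, n < i → qBinomCentral q n i = 0 := qBinomCentral_of_lt q
  rw [tripleProductSum, sum_mul, sum_range_succ', tripleProductTerm_zero_mul,
    sum_congr rfl fun i hi => tripleProductTerm_succ_mul q (mem_range.mp hi) _, tripleProductSum]
  simp only [qBinomCentral, tripleProductTerm_add]
  rw [show n + 1 + 1 = n + 2 from rfl, sum_range_add_add_shift]
  · simp only [Nat.add_sub_cancel, Nat.sub_zero, Nat.zero_sub, Nat.sub_self,
      show ∀ i, n + 1 - (i + 2) = n - (i + 1) from fun i => by omega,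
      show ∀ i, i + 2 - 1 = i + 1 from fun i => by omega]
    rw [add_comm]
  all_goals rw [hc (by omega), mul_zero, tripleProductTerm_zero]

theorem X_sub_one_mul_prod_tripleProductFactor (n : ℕ) :
    (X - 1) * ∏ j ∈ Ioc 0 n, tripleProductFactor q j = tripleProductSum q n := by
  induction n with
  | zero => simp [tripleProductSum, tripleProductTerm, qBinomCentral, triangle]
  | succ n ih => rw [prod_Ioc_succ_top (Nat.zero_le n), ← mul_assoc, ih, tripleProductSum_mul]

theorem eval_one_derivative_tripleProductTerm {n i : ℕ} (h : i ≤ n) (a : A) :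
    (derivative (tripleProductTerm q n i a)).eval 1 =
      (-1) ^ i * (2 * i + 1) * a * q ^ triangle i := by
  simp only [tripleProductTerm, derivative_C_mul, derivative_sub,
    derivative_X_pow, eval_mul, eval_sub, eval_C, eval_pow, eval_X, one_pow, mul_one,
    Nat.cast_sub h, Nat.cast_add, Nat.cast_one]
  ring

-- Differentiate `X_sub_one_mul_prod_tripleProductFactor` at `X = 1`.
theorem qPochhammer_sq (n : ℕ) : qPochhammer q n ^ 2 =
    ∑ i ∈ range (n + 1), (-1) ^ i * (2 * i + 1) * qBinomCentral q n i * q ^ triangle i := by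
  have h := congrArg (fun p => (derivative p).eval 1) (X_sub_one_mul_prod_tripleProductFactor q n)
  simp only [eval_one_derivative_X_sub_one_mul, eval_prod, tripleProductFactor, eval_mul, eval_sub,
    eval_X, eval_C, eval_one, mul_one, tripleProductSum, derivative_sum,
    eval_finsetSum] at h
  rw [sq, qPochhammer, ← prod_mul_distrib, h]
  exact sum_congr rfl fun i hi =>
    eval_one_derivative_tripleProductTerm q (Nat.lt_succ_iff.mp (mem_range.mp hi)) _

theorem qBinomCentral_succ_mul_qPochhammer {n i : ℕ} (hi : i ≤ n)
    (ih : ∀ k ≤ n, qBinomCentral q n k * (qPochhammer q (n - k) * qPochhammer q (n + 1 + k)) =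
      qPochhammer q (2 * n + 1)) :
    qBinomCentral q (n + 1) i * (qPochhammer q (n + 1 - i) * qPochhammer q (n + 1 + 1 + i)) =
      qPochhammer q (2 * (n + 1) + 1) := by
  obtain ⟨d, rfl⟩ : ∃ d, n = i + d := ⟨n - i, by omega⟩
  have h₁ : qBinomCentral q (i + d) i * (qPochhammer q (d + 1) * qPochhammer q (2 * i + d + 2)) =
      qPochhammer q (2 * (i + d) + 1) * ((1 - q ^ (d + 1)) * (1 - q ^ (2 * i + d + 2))) := by
    have := ih i (by omega)
    rw [show i + d - i = d by omega, show i + d + 1 + i = 2 * i + d + 1 by omega] at this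
    rw [qPochhammer_succ, qPochhammer_succ q (2 * i + d + 1)]
    linear_combination ((1 - q ^ (d + 1)) * (1 - q ^ (2 * i + d + 2))) * this
  have h₂ : qBinomCentral q (i + d) (i - 1) *
      (qPochhammer q (d + 1) * qPochhammer q (2 * i + d + 2)) = qPochhammer q (2 * (i + d) + 1) *
        ((1 - q ^ (2 * i + d + 1)) * (1 - q ^ (2 * i + d + 2))) := by
    rcases i with _ | j
    · have := ih 0 (by omega)
      simp only [Nat.zero_sub, Nat.sub_zero, Nat.add_zero, zero_add, mul_zero] at this ⊢
      rw [qPochhammer_succ q (d + 1), qPochhammer_succ q d] at *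
      linear_combination ((1 - q ^ (d + 1)) * (1 - q ^ (d + 2))) * this
    · have := ih j (by omega)
      rw [show j + 1 + d - j = d + 1 by omega,
        show j + 1 + d + 1 + j = 2 * (j + 1) + d by omega] at this
      rw [Nat.add_sub_cancel, qPochhammer_add_two q (2 * (j + 1) + d)]
      linear_combination
        ((1 - q ^ (2 * (j + 1) + d + 1)) * (1 - q ^ (2 * (j + 1) + d + 2))) * this
  have h₃ : qBinomCentral q (i + d) (i + 1) *
      (qPochhammer q (d + 1) * qPochhammer q (2 * i + d + 2)) =
        qPochhammer q (2 * (i + d) + 1) * ((1 - q ^ d) * (1 - q ^ (d + 1))) := by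
    rcases d with _ | e
    · simp [qBinomCentral_of_lt q (Nat.lt_succ_self i)]
    · have := ih (i + 1) (by omega)
      rw [show i + (e + 1) - (i + 1) = e by omega,
        show i + (e + 1) + 1 + (i + 1) = 2 * i + (e + 1) + 2 by omega] at this
      rw [qPochhammer_add_two q e]
      linear_combination ((1 - q ^ (e + 1)) * (1 - q ^ (e + 2))) * this
  rw [qBinomCentral, show i + d + 1 - i = d + 1 by omega,
    show i + d + 1 + 1 + i = 2 * i + d + 2 by omega,
    show 2 * (i + d + 1) + 1 = 2 * (i + d) + 1 + 2 by omega,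
    qPochhammer_add_two q (2 * (i + d) + 1)]
  linear_combination (1 + q ^ (2 * (i + d) + 2)) * h₁ + q ^ (d + 1) * h₂ +
    q ^ (2 * i + d + 2) * h₃

theorem qBinomCentral_mul_qPochhammer {n i : ℕ} (h : i ≤ n) :
    qBinomCentral q n i * (qPochhammer q (n - i) * qPochhammer q (n + 1 + i)) =
      qPochhammer q (2 * n + 1) := by
  induction n generalizing i with
  | zero =>
    obtain rfl : i = 0 := by omega
    simp [qBinomCentral]
  | succ n ih =>
    rcases h.eq_or_lt with rfl | hlt
    · simp [show 2 * (n + 1) + 1 = n + 1 + 1 + (n + 1) by omega]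
    · exact qBinomCentral_succ_mul_qPochhammer q (by omega) fun k hk => ih hk

theorem pow_dvd_prod_one_sub_pow_sub_one {s : Finset ℕ} {d : ℕ} (h : ∀ j ∈ s, d ≤ j) :
    q ^ d ∣ ∏ j ∈ s, (1 - q ^ j) - 1 := by
  refine prod_induction _ (fun x => q ^ d ∣ x - 1) (fun x y hx hy => ?_) (by simp)
    fun j hj => by simpa using pow_dvd_pow q (h j hj)
  rw [show x * y - 1 = (x - 1) * y + (y - 1) by ring]
  exact dvd_add (dvd_mul_of_dvd_left hx y) hy

end FiniteTripleProduct

section PowerSeries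

open PowerSeries

variable {R : Type*} [CommRing R]

theorem isUnit_qPochhammer_X (n : ℕ) : IsUnit (qPochhammer (X : R⟦X⟧) n) :=
  prod_induction _ IsUnit (fun _ _ => IsUnit.mul) isUnit_one fun j hj => by
    rw [isUnit_iff_constantCoeff]
    simp [Nat.pos_iff_ne_zero.mp (mem_Ioc.mp hj).1]

theorem X_pow_dvd_qPochhammer_mul_qBinomCentral_sub_one {n i : ℕ} (h : i ≤ n) :
    (X : R⟦X⟧) ^ (n - i + 1) ∣ qPochhammer X n * qBinomCentral X n i - 1 := by
  have hcancel : qBinomCentral (X : R⟦X⟧) n i * qPochhammer X (n - i) =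
      ∏ j ∈ Ioc (n + 1 + i) (2 * n + 1), (1 - X ^ j) := by
    refine (isUnit_qPochhammer_X (n + 1 + i)).mul_left_cancel ?_
    rw [qPochhammer_mul_prod_Ioc X (by omega), ← qBinomCentral_mul_qPochhammer X h]
    ring
  have hA := pow_dvd_prod_one_sub_pow_sub_one (X : R⟦X⟧) (s := Ioc (n - i) n) (d := n - i + 1)
    fun j hj => (mem_Ioc.mp hj).1
  have hB := pow_dvd_prod_one_sub_pow_sub_one (X : R⟦X⟧) (s := Ioc (n + 1 + i) (2 * n + 1))
    (d := n - i + 1) fun j hj => by have := (mem_Ioc.mp hj).1; omega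
  have hsplit : qPochhammer (X : R⟦X⟧) n * qBinomCentral X n i =
      (∏ j ∈ Ioc (n + 1 + i) (2 * n + 1), (1 - X ^ j)) * ∏ j ∈ Ioc (n - i) n, (1 - X ^ j) := by
    rw [← qPochhammer_mul_prod_Ioc X (Nat.sub_le n i), ← hcancel]
    ring
  rw [hsplit, show ∀ x y : R⟦X⟧, x * y - 1 = (x - 1) * y + (y - 1) from fun x y => by ring]
  exact dvd_add (dvd_mul_of_dvd_left hB _) hA

-- Jacobi's identity modulo `X ^ (n + 1)`, since `(X; X)_n ≡ (X; X)_∞` there.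
theorem X_pow_dvd_qPochhammer_pow_three_sub (n : ℕ) :
    (X : R⟦X⟧) ^ (n + 1) ∣ qPochhammer X n ^ 3 -
      ∑ i ∈ range (n + 1), C ((-1) ^ i * (2 * i + 1) : R) * X ^ triangle i := by
  rw [pow_succ (qPochhammer _ n), qPochhammer_sq, sum_mul, ← sum_sub_distrib]
  refine dvd_sum fun i hi => ?_
  have hi : i ≤ n := Nat.lt_succ_iff.mp (mem_range.mp hi)
  rw [show (-1) ^ i * (2 * (i : R⟦X⟧) + 1) * qBinomCentral X n i * X ^ triangle i * qPochhammer X n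
      - C ((-1) ^ i * (2 * i + 1) : R) * X ^ triangle i =
      C ((-1) ^ i * (2 * i + 1) : R) * X ^ triangle i *
        (qPochhammer X n * qBinomCentral X n i - 1) by
    simp only [map_mul, map_pow, map_neg, map_one, map_add, map_natCast, map_ofNat]; ring]
  calc (X : R⟦X⟧) ^ (n + 1) ∣ X ^ triangle i * X ^ (n - i + 1) := by
        rw [← pow_add]; exact pow_dvd_pow X (by have := le_triangle i; omega)
    _ ∣ _ := by
        rw [mul_assoc]
        exact dvd_mul_of_dvd_right
          (mul_dvd_mul_left _ (X_pow_dvd_qPochhammer_mul_qBinomCentral_sub_one hi)) _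

theorem coeff_qPochhammer_X_pow_three_eq_zero {n s : ℕ} (hs : s ≤ n)
    (h : ∀ i, triangle i ≠ s) : coeff s (qPochhammer (X : R⟦X⟧) n ^ 3) = 0 := by
  have := X_pow_dvd_iff.mp (X_pow_dvd_qPochhammer_pow_three_sub (R := R) n) s (by omega)
  rwa [map_sub, map_sum, sum_eq_zero fun i _ => by rw [coeff_C_mul_X_pow, if_neg (h i).symm],
    sub_zero] at this

theorem prod_one_sub_X_pow_mul_pow_eq_expand {p : ℕ} (hp : p ≠ 0) (N e : ℕ) :
    ∏ k ∈ Icc 1 N, (1 - (X : R⟦X⟧) ^ (p * k)) ^ e = expand p hp (qPochhammer X N ^ e) := by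
  rw [qPochhammer, ← prod_pow, map_prod]
  exact prod_congr rfl fun k _ => by simp [pow_mul]

theorem coeff_mul_eq_coeff_mul_of_coeff_eq {f g : R⟦X⟧} {N : ℕ}
    (h : ∀ m ≤ N, coeff m f = coeff m g) (u : R⟦X⟧) : coeff N (f * u) = coeff N (g * u) := by
  rw [coeff_mul, coeff_mul]
  exact sum_congr rfl fun p hp => by rw [h p.1 (HasAntidiagonal.antidiagonal.fst_le hp)]

theorem coeff_eq_coeff_mul_of_coeff_mul_eq {f g u P : R⟦X⟧} {N : ℕ}
    (hf : ∀ m ≤ N, coeff m (f * P) = coeff m 1) (hg : ∀ m ≤ N, coeff m (g * P) = coeff m u) :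
    coeff N g = coeff N (u * f) := by
  calc coeff N g = coeff N (1 * g) := by rw [one_mul]
    _ = coeff N (f * P * g) := (coeff_mul_eq_coeff_mul_of_coeff_eq hf g).symm
    _ = coeff N (g * P * f) := by ring_nf
    _ = coeff N (u * f) := coeff_mul_eq_coeff_mul_of_coeff_eq hg f

end PowerSeries

open PowerSeries Finset

/-- Let `a(n)` be defined by `∑ a(n) qⁿ = ∏_{n≥1} 1/((1-q^{3n})(1-qⁿ)³)` (equivalently,
`(∑ a(n) qⁿ) · ∏_{n≥1} (1-q^{3n})(1-qⁿ)³ = 1`, encoded coefficientwise via truncated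
products).  If `a(m) ≡ 0 (mod 625)` for all `m ≡ 13, 22, 31, 40 (mod 45)`, and `cφ̄3` is
defined by `∑ cφ̄3(n) qⁿ = 9q ∏_{n≥1} (1-q^{9n})³/((1-q^{3n})(1-qⁿ)³)`, then
`cφ̄3(45n+23) ≡ 0 (mod 625)` for all `n ≥ 0`. -/
theorem stmt_3 (a cbar : ℕ → ℤ)
    (ha : ∀ N : ℕ, ∀ m ≤ N,
      coeff (R := ℤ) m (PowerSeries.mk a *
        ∏ n ∈ Finset.Icc 1 N, ((1 - X ^ (3 * n)) * (1 - X ^ n) ^ 3))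
        = coeff (R := ℤ) m (1 : PowerSeries ℤ))
    (hcbar : ∀ N : ℕ, ∀ m ≤ N,
      coeff (R := ℤ) m (PowerSeries.mk cbar *
        ∏ n ∈ Finset.Icc 1 N, ((1 - X ^ (3 * n)) * (1 - X ^ n) ^ 3))
        = coeff (R := ℤ) m (9 * X * ∏ n ∈ Finset.Icc 1 N, (1 - X ^ (9 * n)) ^ 3))
    (hdvd : ∀ m : ℕ, (m % 45 = 13 ∨ m % 45 = 22 ∨ m % 45 = 31 ∨ m % 45 = 40) →
      (625 : ℤ) ∣ a m) :
    ∀ n : ℕ, (625 : ℤ) ∣ cbar (45 * n + 23) := by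
  intro n
  have hc := coeff_eq_coeff_mul_of_coeff_mul_eq (ha (45 * n + 23)) (hcbar (45 * n + 23))
  rw [coeff_mk, prod_one_sub_X_pow_mul_pow_eq_expand (by norm_num : 9 ≠ 0),
    show ∀ E : ℤ⟦X⟧, 9 * X * E * PowerSeries.mk a = X * (C 9 * (E * PowerSeries.mk a)) from
      fun E => by rw [map_ofNat]; ring,
    coeff_succ_X_mul, coeff_C_mul, coeff_mul] at hc
  rw [hc]
  refine dvd_mul_of_dvd_right (dvd_sum fun ⟨i, j⟩ hij => ?_) _
  rw [HasAntidiagonal.mem_antidiagonal] at hij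
  rw [coeff_mk]
  by_cases h9 : 9 ∣ i
  · obtain ⟨s, rfl⟩ := h9
    rw [coeff_expand_mul]
    by_cases h5 : s % 5 = 2
    · rw [coeff_qPochhammer_X_pow_three_eq_zero (by omega)
        fun k hk => triangle_mod_five_ne_two k (hk ▸ h5), zero_mul]
      exact dvd_zero _
    · exact dvd_mul_of_dvd_right (hdvd j (by omega)) _
  · rw [coeff_expand_of_not_dvd _ _ _ h9, zero_mul]
    exact dvd_zero _
end

section
/- Let a(n) be defined by ∑_{n≥0} a(n) qⁿ = ∏_{n≥1} 1/((1 - q^{3n})(1 - qⁿ)³) as a formal power series over ℤ. If a(m) ≡ 0 (mod 625) for all m ≡ 13, 22, 31, 40 (mod 45), then for cφ̄3 defined by ∑_{n≥0} cφ̄3(n) qⁿ = 9q ∏_{n≥1} (1-q^{9n})³/((1-q^{3n})(1-qⁿ)³), one has cφ̄3(45n+41) ≡ 0 (mod 625) for all n ≥ 0. -/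
/-!
By Jacobi's identity `∏ (1 - qⁿ)³ = ∑ₖ (-1)ᵏ (2k+1) q^(k(k+1)/2)`, the coefficients of
`(q; q)∞³` vanish at exponents `≡ 4 (mod 5)`: `8 · k(k+1)/2 + 1 = (2k+1)²` while `3` is not a
square mod `5`. So the coefficients of `(q⁹; q⁹)∞³` vanish at exponents `≡ 36 (mod 45)`, and in
`cφ̄3(45n+41) = 9 ∑ᵢ [qⁱ](q⁹; q⁹)∞³ · a(45n+40-i)` every other term has `45n+40-i ≡ 13, 22, 31`
or `40 (mod 45)`.

The vanishing is proved from the finite triple product `Tₙ(z) = ∏_{i<n} (1 - q^(i+1) z)(z - qⁱ)`.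
Its functional equation `Tₙ(qz)(qz - qⁿ) = -qⁿ(1 - q^(n+1) z) Tₙ(z)` makes its coefficients signed
Gaussian binomials times `q^(k-n)(k-n+1)/2`, and `T'ₙ(1) = (q; q)ₙ (q; q)ₙ₋₁` writes
`(q; q)ₙ³` as a sum over `k` of these coefficients times `k (q; q)ₙ (1 - qⁿ)`, each of which is
`± k q^(k-n)(k-n+1)/2` in degrees below `n - 1`.
-/

open PowerSeries Finset

def triangular (x : ℤ) : ℕ := (x * (x + 1) / 2).toNat

lemma two_mul_triangular (x : ℤ) : 2 * (triangular x : ℤ) = x * (x + 1) := by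
  have hnonneg : 0 ≤ x * (x + 1) := by
    rcases le_or_gt 0 x with h | h <;> nlinarith
  rw [triangular, Int.toNat_of_nonneg (Int.ediv_nonneg hnonneg (by norm_num)),
    Int.two_mul_ediv_two_of_even (Int.even_mul_succ_self x)]

lemma le_triangular (x : ℤ) : x ≤ triangular x ∧ -x - 1 ≤ triangular x := by
  have h := two_mul_triangular x
  constructor
  · rcases le_or_gt x 0 with hx | hx <;> nlinarith
  · rcases le_or_gt x (-2) with hx | hx <;> nlinarith

lemma triangular_mod_five_ne_four (x : ℤ) : triangular x % 5 ≠ 4 := by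
  intro h
  have hcast : (triangular x : ZMod 5) = 4 := by
    rw [← ZMod.natCast_mod, h]; rfl
  have hsq : ((2 * x + 1 : ℤ) : ZMod 5) ^ 2 = 3 := by
    have h8 : (2 * x + 1) ^ 2 = 8 * (triangular x : ℤ) + 1 := by
      linear_combination -4 * two_mul_triangular x
    rw [← Int.cast_pow, h8]
    push_cast
    rw [hcast]
    decide
  exact (by decide : ∀ y : ZMod 5, y ^ 2 ≠ 3) _ hsq

lemma dvd_mul_sub_one {R : Type*} [CommRing R] {d a b : R} (ha : d ∣ a - 1) (hb : d ∣ b - 1) :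
    d ∣ a * b - 1 := by
  have h : a * b - 1 = (a - 1) * b + (b - 1) := by ring
  rw [h]
  exact (ha.mul_right b).add hb

namespace Polynomial

noncomputable def qPochhammer (n : ℕ) : ℤ[X] := ∏ i ∈ range n, (1 - X ^ (i + 1))

lemma qPochhammer_succ (n : ℕ) : qPochhammer (n + 1) = qPochhammer n * (1 - X ^ (n + 1)) :=
  prod_range_succ _ n

lemma qPochhammer_ne_zero (n : ℕ) : qPochhammer n ≠ 0 := by
  intro h
  simpa [qPochhammer, eval_prod] using congrArg (eval 0) h

lemma X_pow_dvd_one_sub_X_pow_sub_one {R : Type*} [CommRing R] {c e : ℕ} (h : c ≤ e) :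
    (X : R[X]) ^ c ∣ (1 - X ^ e) - 1 := by
  rw [sub_sub_cancel_left]
  exact (pow_dvd_pow X h).neg_right

lemma exists_qPochhammer_eq_mul {a b : ℕ} (h : a ≤ b) :
    ∃ R, qPochhammer b = qPochhammer a * R ∧ X ^ (a + 1) ∣ R - 1 := by
  refine ⟨∏ i ∈ Ico a b, (1 - X ^ (i + 1)), (prod_range_mul_prod_Ico _ h).symm, ?_⟩
  induction b, h using Nat.le_induction with
  | base => simp
  | succ b hab ih =>
    rw [prod_Ico_succ_top hab]
    exact dvd_mul_sub_one ih (X_pow_dvd_one_sub_X_pow_sub_one (by omega))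

lemma coeff_X_pow_mul_eq_zero {R : Type*} [CommRing R] {S : R[X]} {c e m : ℕ}
    (hS : X ^ c ∣ S - 1) (hne : m ≠ e) (hlt : m < e + c) : (X ^ e * S).coeff m = 0 := by
  have hdvd : X ^ (e + c) ∣ X ^ e * (S - 1) := by
    rw [pow_add]; exact mul_dvd_mul_left _ hS
  have h : X ^ e * S = X ^ e + X ^ e * (S - 1) := by ring
  rw [h, coeff_add, coeff_X_pow, if_neg hne, X_pow_dvd_iff.mp hdvd m hlt, add_zero]

/-- The finite Jacobi triple product `∏_{i<n} (1 - q^(i+1) z)(z - qⁱ)`, a polynomial in `z`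
over `ℤ[q]`. -/
noncomputable def tripleProd (n : ℕ) : ℤ[X][X] :=
  ∏ i ∈ range n, (1 - C (X ^ (i + 1)) * X) * (X - C (X ^ i))

lemma tripleProd_comp_mul (n : ℕ) :
    (tripleProd n).comp (C X * X) * (C X * X - C (X ^ n))
      = -C (X ^ n : ℤ[X]) * (1 - C (X ^ (n + 1)) * X) * tripleProd n := by
  induction n with
  | zero => simp [tripleProd]; ring
  | succ n ih =>
    simp only [tripleProd, prod_range_succ, mul_comp] at ih ⊢
    simp only [sub_comp, one_comp, mul_comp, C_comp, X_comp, pow_comp, pow_succ, C_mul, C_pow]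
      at ih ⊢
    linear_combination (C X * X - C X ^ n * C X) * (1 - C X ^ n * C X * C X * X) * ih

lemma coeff_tripleProd_recurrence (n k : ℕ) :
    X ^ n * (1 - X ^ (k + 1)) * (tripleProd n).coeff (k + 1)
      = (X ^ (2 * n + 1) - X ^ (k + 1)) * (tripleProd n).coeff k := by
  have h : (tripleProd n).comp (C X * X) * X * C X - (tripleProd n).comp (C X * X) * C (X ^ n)
      = C (-X ^ n) * tripleProd n + C (X ^ n * X ^ (n + 1)) * (X * tripleProd n) := by
    simp only [C_neg, C_mul]
    linear_combination tripleProd_comp_mul n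
  have hk := congrArg (coeff · (k + 1)) h
  simp only [coeff_sub, coeff_add, coeff_mul_C, coeff_mul_X, coeff_C_mul, coeff_X_mul,
    comp_C_mul_X_coeff] at hk
  linear_combination hk

lemma coeff_zero_tripleProd (n : ℕ) :
    (tripleProd n).coeff 0 = (-1) ^ n * X ^ triangular (-n) := by
  induction n with
  | zero => simp [tripleProd, triangular]
  | succ n ih =>
    have he : triangular (-(n + 1 : ℕ)) = triangular (-n) + n := by
      have h1 := two_mul_triangular (-(n + 1 : ℕ))
      have h2 := two_mul_triangular (-n)
      push_cast at h1 ⊢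
      linarith
    rw [tripleProd, prod_range_succ, mul_coeff_zero, ← tripleProd, ih, he]
    simp only [mul_coeff_zero, coeff_sub, coeff_one_zero, coeff_X_zero, coeff_C_zero]
    ring

/-- `(tripleProd n).coeff k = (-1)^(n+k) q^((k-n)(k-n+1)/2) [2n, k]_q`, stated without division. -/
lemma coeff_tripleProd_mul_qPochhammer {n k : ℕ} (hk : k ≤ 2 * n) :
    (tripleProd n).coeff k * qPochhammer k * qPochhammer (2 * n - k)
      = (-1) ^ (n + k) * X ^ triangular (k - n) * qPochhammer (2 * n) := by
  induction k with
  | zero => simp [coeff_zero_tripleProd, qPochhammer]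
  | succ k ih =>
    obtain ⟨r, hr⟩ : ∃ r, 2 * n - k = r + 1 := ⟨2 * n - k - 1, by omega⟩
    have he : triangular ((k + 1 : ℕ) - n) + n = triangular (k - n) + (k + 1) := by
      have h1 := two_mul_triangular ((k + 1 : ℕ) - n)
      have h2 := two_mul_triangular (k - n)
      push_cast at h1 ⊢
      linarith
    apply mul_left_cancel₀ (pow_ne_zero n (X_ne_zero : (X : ℤ[X]) ≠ 0))
    rw [show 2 * n - (k + 1) = r by omega, qPochhammer_succ]
    rw [hr, qPochhammer_succ] at ih
    have hX : (X : ℤ[X]) ^ n * X ^ triangular ((k + 1 : ℕ) - n)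
        = X ^ triangular (k - n) * X ^ (k + 1) := by
      rw [← pow_add, ← pow_add, add_comm n, he]
    have hrec := coeff_tripleProd_recurrence n k
    rw [show 2 * n + 1 = (k + 1) + (r + 1) by omega, pow_add X (k + 1)] at hrec
    linear_combination (qPochhammer k * qPochhammer r) * hrec
      - X ^ (k + 1) * ih (by omega) - (-1) ^ (n + (k + 1)) * qPochhammer (2 * n) * hX

lemma natDegree_tripleProd_le (n : ℕ) : (tripleProd n).natDegree ≤ 2 * n := by
  induction n with
  | zero => simp [tripleProd]
  | succ n ih =>
    rw [tripleProd, prod_range_succ, ← tripleProd]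
    refine (natDegree_mul_le).trans ?_
    have h2 : ((1 - C (X ^ (n + 1)) * X) * (X - C (X ^ n)) : ℤ[X][X]).natDegree ≤ 2 := by
      compute_degree
    omega

lemma eval_one_derivative_tripleProd (n : ℕ) :
    (derivative (tripleProd (n + 1))).eval 1 = qPochhammer (n + 1) * qPochhammer n := by
  rw [tripleProd, prod_range_succ', qPochhammer, qPochhammer, prod_range_succ']
  simp [derivative_mul, eval_prod, prod_mul_distrib]
  ring

lemma qPochhammer_succ_pow_three (n : ℕ) :
    qPochhammer (n + 1) ^ 3 = ∑ k ∈ range (2 * (n + 1) + 1),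
      (k : ℤ[X]) * ((tripleProd (n + 1)).coeff k * (qPochhammer (n + 1) * (1 - X ^ (n + 1)))) := by
  have hsum : qPochhammer (n + 1) * qPochhammer n
      = ∑ k ∈ range (2 * (n + 1) + 1), (k : ℤ[X]) * (tripleProd (n + 1)).coeff k := by
    rw [← eval_one_derivative_tripleProd, derivative_eval,
      sum_over_range' _ (by simp) _ (Nat.lt_succ_of_le (natDegree_tripleProd_le _))]
    simp only [one_pow, mul_one]
    exact sum_congr rfl fun k _ => mul_comm _ _
  simp only [← mul_assoc, ← sum_mul, ← hsum, qPochhammer_succ]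
  ring

lemma coeff_coeff_tripleProd_mul_eq_zero {n k m : ℕ} (hk : k ≤ 2 * n) (hm : m % 5 = 4)
    (hmn : m + 1 < n) :
    ((tripleProd n).coeff k * (qPochhammer n * (1 - X ^ n))).coeff m = 0 := by
  set j := min k (2 * n - k) with hj
  set M := max k (2 * n - k) with hM
  set e := triangular (k - n)
  have hjM : qPochhammer k * qPochhammer (2 * n - k) = qPochhammer j * qPochhammer M := by
    rcases le_total k (2 * n - k) with h | h
    · rw [hj, hM, min_eq_left h, max_eq_right h]
    · rw [hj, hM, min_eq_right h, max_eq_left h, mul_comm]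
  obtain ⟨R, hR, hRdvd⟩ := exists_qPochhammer_eq_mul (show M ≤ 2 * n by omega)
  obtain ⟨R', hR', hR'dvd⟩ := exists_qPochhammer_eq_mul (show j ≤ n by omega)
  have hcancel : (tripleProd n).coeff k * qPochhammer j = (-1) ^ (n + k) * X ^ e * R := by
    apply mul_right_cancel₀ (qPochhammer_ne_zero M)
    have h := coeff_tripleProd_mul_qPochhammer hk
    rw [mul_assoc, hjM, hR] at h
    linear_combination h
  have hterm : (tripleProd n).coeff k * (qPochhammer n * (1 - X ^ n))
      = (-1) ^ (n + k) * (X ^ e * (R * R' * (1 - X ^ n))) := by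
    rw [hR']
    linear_combination (R' * (1 - X ^ n)) * hcancel
  have hS : X ^ j ∣ R * R' * (1 - X ^ n) - 1 :=
    dvd_mul_sub_one
      (dvd_mul_sub_one ((pow_dvd_pow X (by omega)).trans hRdvd)
        ((pow_dvd_pow X (by omega)).trans hR'dvd))
      (X_pow_dvd_one_sub_X_pow_sub_one (by omega))
  have hne : m ≠ e := fun h => triangular_mod_five_ne_four _ (h ▸ hm)
  have hlt : m < e + j := by
    have := le_triangular (k - n)
    omega
  rcases neg_one_pow_eq_or ℤ[X] (n + k) with h | h <;>
    simp [hterm, h, coeff_X_pow_mul_eq_zero hS hne hlt]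

lemma coeff_qPochhammer_pow_three_eq_zero {m n : ℕ} (hm : m % 5 = 4) (hmn : m + 1 < n) :
    (qPochhammer n ^ 3).coeff m = 0 := by
  obtain ⟨n, rfl⟩ : ∃ n', n = n' + 1 := ⟨n - 1, by omega⟩
  rw [qPochhammer_succ_pow_three, finsetSum_coeff]
  refine sum_eq_zero fun k hk => ?_
  rw [coeff_natCast_mul, coeff_coeff_tripleProd_mul_eq_zero (by simp at hk; omega) hm hmn,
    mul_zero]

end Polynomial

lemma dvd_sub_mul_of_dvd {R : Type*} [CommRing R] {d f g h P : R} (hf : d ∣ f * P - 1)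
    (hg : d ∣ g * P - h) : d ∣ g - h * f := by
  have e : g - h * f = (g * P - h) * f - g * (f * P - 1) := by ring
  rw [e]
  exact (hg.mul_right f).sub (hf.mul_left g)

lemma PowerSeries.X_pow_dvd_sub_of_coeff_eq {R : Type*} [CommRing R] {f g : R⟦X⟧} {N : ℕ}
    (h : ∀ m ≤ N, coeff m f = coeff m g) : X ^ (N + 1) ∣ f - g :=
  X_pow_dvd_iff.mpr fun m hm => by rw [map_sub, h m (by omega), sub_self]

lemma PowerSeries.coeff_prod_one_sub_X_pow_mul_pow_three {d : ℕ} (hd : 0 < d) (N i : ℕ) :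
    coeff i (∏ n ∈ Icc 1 N, (1 - X ^ (d * n)) ^ 3 : ℤ⟦X⟧)
      = if d ∣ i then (Polynomial.qPochhammer N ^ 3).coeff (i / d) else 0 := by
  have h : (∏ n ∈ Icc 1 N, (1 - X ^ (d * n)) ^ 3 : ℤ⟦X⟧)
      = (Polynomial.expand ℤ d (Polynomial.qPochhammer N ^ 3) : ℤ⟦X⟧) := by
    induction N with
    | zero => simp [Polynomial.qPochhammer]
    | succ N ih =>
      rw [prod_Icc_succ_top (by omega), ih, Polynomial.qPochhammer_succ]
      simp [mul_pow, pow_mul]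
  rw [h, Polynomial.coeff_coe, Polynomial.coeff_expand hd]

/-- Let `a(n)` be defined by `∑ a(n) qⁿ = ∏_{n≥1} 1/((1-q^{3n})(1-qⁿ)³)` (equivalently,
`(∑ a(n) qⁿ) · ∏_{n≥1} (1-q^{3n})(1-qⁿ)³ = 1`, encoded coefficientwise via truncated
products).  If `a(m) ≡ 0 (mod 625)` for all `m ≡ 13, 22, 31, 40 (mod 45)`, and `cφ̄3` is
defined by `∑ cφ̄3(n) qⁿ = 9q ∏_{n≥1} (1-q^{9n})³/((1-q^{3n})(1-qⁿ)³)`, then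
`cφ̄3(45n+41) ≡ 0 (mod 625)` for all `n ≥ 0`. -/
theorem stmt_4 (a cbar : ℕ → ℤ)
    (ha : ∀ N : ℕ, ∀ m ≤ N,
      coeff (R := ℤ) m (PowerSeries.mk a *
        ∏ n ∈ Finset.Icc 1 N, ((1 - X ^ (3 * n)) * (1 - X ^ n) ^ 3))
        = coeff (R := ℤ) m (1 : PowerSeries ℤ))
    (hcbar : ∀ N : ℕ, ∀ m ≤ N,
      coeff (R := ℤ) m (PowerSeries.mk cbar *
        ∏ n ∈ Finset.Icc 1 N, ((1 - X ^ (3 * n)) * (1 - X ^ n) ^ 3))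
        = coeff (R := ℤ) m (9 * X * ∏ n ∈ Finset.Icc 1 N, (1 - X ^ (9 * n)) ^ 3))
    (hdvd : ∀ m : ℕ, (m % 45 = 13 ∨ m % 45 = 22 ∨ m % 45 = 31 ∨ m % 45 = 40) →
      (625 : ℤ) ∣ a m) :
    ∀ n : ℕ, (625 : ℤ) ∣ cbar (45 * n + 41) := by
  intro u
  have hdiv := dvd_sub_mul_of_dvd (X_pow_dvd_sub_of_coeff_eq (ha (45 * u + 41)))
    (X_pow_dvd_sub_of_coeff_eq (hcbar (45 * u + 41)))
  have hcoeff := X_pow_dvd_iff.mp hdiv (45 * u + 41) (lt_add_one _)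
  rw [map_sub, sub_eq_zero, coeff_mk, mul_assoc, mul_assoc] at hcoeff
  rw [hcoeff, ← map_ofNat C 9, coeff_C_mul, coeff_succ_X_mul, coeff_mul]
  refine dvd_mul_of_dvd_right (dvd_sum fun p hp => ?_) _
  rw [HasAntidiagonal.mem_antidiagonal] at hp
  rw [coeff_prod_one_sub_X_pow_mul_pow_three (by norm_num), coeff_mk]
  split_ifs with h9
  · by_cases h4 : p.1 / 9 % 5 = 4
    · simp [Polynomial.coeff_qPochhammer_pow_three_eq_zero (n := 45 * u + 41) h4 (by omega)]
    · exact dvd_mul_of_dvd_right (hdvd p.2 (by omega)) _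
  · simp
end

section
/- For any prime l and integer s ≥ 1, the formal power series ∏_{n≥1} (1 - qⁿ)^{l^s} / (1 - q^{ln})^{l^{s-1}} is congruent to 1 modulo l^s, i.e., all coefficients of positive powers of q are divisible by l^s. -/
open PowerSeries Finset

/-!
Write `A = ∏ (1 - qⁿ)^{l^s}` and `B = ∏ (1 - q^{ln})^{l^{s-1}}` over `1 ≤ n ≤ N`. Factorwise,
`(1 - x)^l ≡ 1 - x^l (mod l)`, and raising a congruence mod `l` to the power `l^{s-1}` makes it
a congruence mod `l^s`; hence `A ≡ B (mod l^s)`. Since `B` is a unit with `F B ≡ A (mod q^{N+1})`,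
`F - 1 ≡ (A - B) B⁻¹ (mod q^{N+1})`, whose coefficients are all divisible by `l^s`.
-/

theorem dvd_prod_sub_prod {R ι : Type*} [CommRing R] {d : R} {s : Finset ι} {f g : ι → R}
    (h : ∀ i ∈ s, d ∣ f i - g i) : d ∣ ∏ i ∈ s, f i - ∏ i ∈ s, g i := by
  simp_rw [← Ideal.mem_span_singleton, ← Ideal.Quotient.mk_eq_mk_iff_sub_mem] at h ⊢
  simp only [map_prod]
  exact prod_congr rfl h

theorem prime_dvd_one_sub_pow_sub_one_sub_pow {R : Type*} [CommRing R] {l : ℕ} (hl : l.Prime)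
    (x : R) : (l : R) ∣ (1 - x) ^ l - (1 - x ^ l) := by
  obtain ⟨r, hr⟩ := exists_add_pow_prime_eq hl (1 - x) x
  rw [sub_add_cancel, one_pow] at hr
  exact ⟨-((1 - x) * x * r), by linear_combination -hr⟩

theorem prime_pow_dvd_one_sub_pow_sub_one_sub_pow {R : Type*} [CommRing R] {l : ℕ}
    (hl : l.Prime) (x : R) (k : ℕ) :
    (l : R) ^ (k + 1) ∣ (1 - x) ^ l ^ (k + 1) - (1 - x ^ l) ^ l ^ k := by
  rw [pow_succ' l k, pow_mul]
  exact dvd_sub_pow_of_dvd_sub (prime_dvd_one_sub_pow_sub_one_sub_pow hl x) k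

namespace PowerSeries

variable {R : Type*} [CommRing R]

theorem dvd_coeff_of_X_pow_dvd_sub_C_mul {d : R} {m : ℕ} {φ ψ : R⟦X⟧}
    (h : X ^ (m + 1) ∣ φ - C d * ψ) : d ∣ coeff m φ := by
  have hm := X_pow_dvd_iff.mp h m m.lt_succ_self
  rw [map_sub, coeff_C_mul, sub_eq_zero] at hm
  exact ⟨_, hm⟩

theorem dvd_coeff_sub_one_of_mul_unit {d : R} {m : ℕ} {φ A B : R⟦X⟧} (hB : IsUnit B)
    (hφ : X ^ (m + 1) ∣ φ * B - A) (hAB : C d ∣ A - B) : d ∣ coeff m (φ - 1) := by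
  obtain ⟨U, hBU⟩ := hB.exists_right_inv
  obtain ⟨G, hG⟩ := hAB
  refine dvd_coeff_of_X_pow_dvd_sub_C_mul (ψ := G * U) ?_
  have e : φ - 1 - C d * (G * U) = (φ * B - A) * U := by
    linear_combination (1 - φ) * hBU + U * hG
  exact e ▸ hφ.mul_right U

end PowerSeries

/-- For any prime `l` and integer `s ≥ 1`, the formal power series
`F = ∏_{n≥1} (1-qⁿ)^{l^s} / (1-q^{ln})^{l^{s-1}}` (encoded coefficientwise via truncated
products) is congruent to `1` modulo `l^s` in `ℤ[[q]]`. -/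
theorem stmt_5 (l s : ℕ) (hl : l.Prime) (hs : 1 ≤ s) (F : PowerSeries ℤ)
    (hF : ∀ N : ℕ, ∀ m ≤ N,
      coeff (R := ℤ) m (F * ∏ n ∈ Finset.Icc 1 N, (1 - X ^ (l * n)) ^ (l ^ (s - 1)))
        = coeff (R := ℤ) m (∏ n ∈ Finset.Icc 1 N, (1 - X ^ n) ^ (l ^ s))) :
    ∀ m : ℕ, ((l : ℤ) ^ s) ∣ coeff (R := ℤ) m (F - 1) := by
  intro m
  obtain ⟨k, rfl⟩ : ∃ k, s = k + 1 := ⟨s - 1, by omega⟩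
  rw [Nat.add_sub_cancel] at hF
  refine dvd_coeff_sub_one_of_mul_unit (m := m)
    (A := ∏ n ∈ Icc 1 m, (1 - X ^ n) ^ l ^ (k + 1))
    (B := ∏ n ∈ Icc 1 m, (1 - X ^ (l * n)) ^ l ^ k) ?_ ?_ ?_
  · have hB : ∀ n ∈ Icc 1 m, constantCoeff ((1 - X ^ (l * n) : ℤ⟦X⟧) ^ l ^ k) = 1 := by
      intro n hn
      have : l * n ≠ 0 := mul_ne_zero hl.ne_zero (by simp at hn; omega)
      simp [this]
    rw [isUnit_iff_constantCoeff, map_prod, prod_eq_one hB]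
    exact isUnit_one
  · exact X_pow_dvd_iff.mpr fun j hj => by rw [map_sub, hF m j (by omega), sub_self]
  · rw [map_pow, map_natCast]
    refine dvd_prod_sub_prod fun n _ => ?_
    rw [mul_comm, pow_mul]
    exact prime_pow_dvd_one_sub_pow_sub_one_sub_pow hl (X ^ n) k
end

section
/- The formal power series ∏_{n≥1} (1 - qⁿ)^{25} / (1 - q^{5n})^{5} is congruent to 1 modulo 25 in ℤ[[q]]. -/
open PowerSeries Finset

/-!
Modulo `p`, `(1 - x) ^ p ≡ 1 - x ^ p`, and raising a congruence modulo `p` to the power `p ^ k`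
upgrades it to a congruence modulo `p ^ (k + 1)`; hence `(1 - qⁿ) ^ p ^ (k + 1)` and
`(1 - q ^ (p n)) ^ p ^ k` agree in `(ℤ / p ^ (k + 1))⟦q⟧`. Reducing the defining relation of `F`
modulo `p ^ (k + 1)` then gives `(F - 1) · P ≡ 0` for a unit `P`, so `F ≡ 1`.
-/

section CommRing

variable {R : Type*} [CommRing R] {p : ℕ}

theorem prime_dvd_one_sub_pow_sub (hp : p.Prime) (x : R) :
    (p : R) ∣ (1 - x) ^ p - (1 - x ^ p) := by
  rcases hp.eq_two_or_odd' with rfl | hodd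
  · exact ⟨x ^ 2 - x, by ring⟩
  · obtain ⟨r, hr⟩ := exists_add_pow_prime_eq hp 1 (-x)
    refine ⟨-x * r, ?_⟩
    rw [sub_eq_add_neg 1 x, hr, hodd.neg_pow]
    ring

theorem prime_pow_succ_dvd_one_sub_pow_sub (hp : p.Prime) (x : R) (k : ℕ) :
    (p ^ (k + 1) : R) ∣ (1 - x) ^ p ^ (k + 1) - (1 - x ^ p) ^ p ^ k := by
  rw [pow_succ' p k, pow_mul]
  exact dvd_sub_pow_of_dvd_sub (prime_dvd_one_sub_pow_sub hp x) k

theorem PowerSeries.isUnit_one_sub_X_pow {k : ℕ} (hk : k ≠ 0) : IsUnit (1 - X ^ k : R⟦X⟧) := by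
  simp [isUnit_iff_constantCoeff, hk]

end CommRing

theorem one_sub_X_pow_pow_prime_pow_succ {p : ℕ} (hp : p.Prime) (n k : ℕ) :
    ((1 - X ^ n) ^ p ^ (k + 1) : (ZMod (p ^ (k + 1)))⟦X⟧) = (1 - X ^ (p * n)) ^ p ^ k := by
  obtain ⟨c, hc⟩ := prime_pow_succ_dvd_one_sub_pow_sub hp (X ^ n : (ZMod (p ^ (k + 1)))⟦X⟧) k
  have hchar : (p ^ (k + 1) : (ZMod (p ^ (k + 1)))⟦X⟧) = 0 := by
    rw [← Nat.cast_pow, ← map_natCast C, ZMod.natCast_self, map_zero]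
  rw [hchar, zero_mul, sub_eq_zero, ← pow_mul, mul_comm n] at hc
  exact hc

theorem prime_pow_succ_dvd_coeff_sub_one {p k : ℕ} (hp : p.Prime) (F : ℤ⟦X⟧)
    (hF : ∀ N : ℕ, ∀ m ≤ N,
      coeff m (F * ∏ n ∈ Icc 1 N, (1 - X ^ (p * n)) ^ p ^ k)
        = coeff m (∏ n ∈ Icc 1 N, (1 - X ^ n) ^ p ^ (k + 1)))
    (m : ℕ) : (p ^ (k + 1) : ℤ) ∣ coeff m (F - 1) := by
  set φ := PowerSeries.map (Int.castRingHom (ZMod (p ^ (k + 1))))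
  set P : ℤ⟦X⟧ := ∏ n ∈ Icc 1 m, (1 - X ^ (p * n)) ^ p ^ k
  have hPunit : IsUnit (φ P) := by
    refine IsUnit.map φ (IsUnit.prod_iff.2 fun n hn => (isUnit_one_sub_X_pow ?_).pow _)
    exact mul_ne_zero hp.ne_zero (Nat.one_le_iff_ne_zero.1 (mem_Icc.1 hn).1)
  have hQ : φ (∏ n ∈ Icc 1 m, (1 - X ^ n) ^ p ^ (k + 1)) = φ P := by
    simp [φ, P, map_prod, one_sub_X_pow_pow_prime_pow_succ hp]
  have hdvd : X ^ (m + 1) ∣ (φ F - 1) * φ P := by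
    refine X_pow_dvd_iff.2 fun j hj => ?_
    rw [sub_mul, one_mul, ← map_mul, map_sub, coeff_map, hF m j (by omega), ← coeff_map, hQ,
      sub_self]
  have hcoeff := X_pow_dvd_iff.1 (hPunit.dvd_mul_right.1 hdvd) m (lt_add_one m)
  rw [← map_one φ, ← map_sub, coeff_map] at hcoeff
  exact_mod_cast (ZMod.intCast_zmod_eq_zero_iff_dvd _ _).1 hcoeff

/-- The formal power series `∏_{n≥1} (1-qⁿ)^{25} / (1-q^{5n})^{5}` (encoded
coefficientwise via truncated products) is congruent to `1` modulo `25` in `ℤ[[q]]`. -/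
theorem stmt_6 (F : PowerSeries ℤ)
    (hF : ∀ N : ℕ, ∀ m ≤ N,
      coeff (R := ℤ) m (F * ∏ n ∈ Finset.Icc 1 N, (1 - X ^ (5 * n)) ^ 5)
        = coeff (R := ℤ) m (∏ n ∈ Finset.Icc 1 N, (1 - X ^ n) ^ 25)) :
    ∀ m : ℕ, (25 : ℤ) ∣ coeff (R := ℤ) m (F - 1) :=
  prime_pow_succ_dvd_coeff_sub_one (k := 1) Nat.prime_five F hF
end

section
/- Let r(n) be defined by ∑ r(n) qⁿ = q^{41} · ∏_{n≥1} 1/((1-q^{3n})(1-qⁿ)³) · ∏_{n≥1} (1-q^{45n})^{13}(1-q^{135n})³ · ∏_{n≥1} (1-qⁿ)^{1250}/(1-q^{5n})^{250}, and let a(n) be defined by ∑ a(n) qⁿ = ∏_{n≥1} 1/((1-q^{3n})(1-qⁿ)³). If r(m) ≡ 0 (mod 625) whenever m ≡ 9, 18, 27, 36 (mod 45), then a(m) ≡ 0 (mod 625) whenever m ≡ 13, 22, 31, 40 (mod 45). -/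
open PowerSeries Finset

/-! Modulo 625 one has `(1 - qⁿ) ^ 1250 = (1 - q ^ (5n)) ^ 250`: this is the congruence
`(a + b) ^ (5 ^ 4) ≡ (a ^ 5 + b ^ 5) ^ (5 ^ 3) (mod 5 ^ 4)`, squared. Cancelling the unit
`∏ (1 - q ^ (5n)) ^ 250` and multiplying by `∑ a(n) qⁿ = 1 / ∏ (1 - q ^ (3n)) (1 - qⁿ) ^ 3` turns
the relation defining `r` into `∑ r(n) qⁿ ≡ q ^ 41 E(q) ∑ a(n) qⁿ (mod 625)`, where
`E = ∏ (1 - q ^ (45n)) ^ 13 (1 - q ^ (135n)) ^ 3` is a series in `q ^ 45` with constant term 1.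
Comparing coefficients of `q ^ (m + 41)` gives `a(m)` modulo 625 in terms of `r(m + 41)` and the
`a(m - 45k)`, `k ≥ 1`, so induction on `m` within its residue class modulo 45 concludes. -/

theorem pow_dvd_add_pow_prime_pow_sub {R : Type*} [CommRing R] {p : ℕ} (hp : p.Prime)
    (a b : R) (k : ℕ) :
    (p ^ (k + 1) : R) ∣ (a + b) ^ p ^ (k + 1) - (a ^ p + b ^ p) ^ p ^ k := by
  obtain ⟨c, hc⟩ := exists_add_pow_prime_eq hp a b
  have hfrob : (p : R) ∣ (a + b) ^ p - (a ^ p + b ^ p) := ⟨a * b * c, by rw [hc]; ring⟩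
  simpa only [← pow_mul, ← pow_succ'] using dvd_sub_pow_of_dvd_sub hfrob k

theorem one_sub_pow_1250 {R : Type*} [CommRing R] (h : (625 : R) = 0) (y : R) :
    (1 - y) ^ 1250 = (1 - y ^ 5) ^ 250 := by
  have h5 := pow_dvd_add_pow_prime_pow_sub Nat.prime_five 1 (-y) 3
  rw [one_pow, Odd.neg_pow (by decide), ← sub_eq_add_neg, ← sub_eq_add_neg, Nat.cast_ofNat,
    show (5 : R) ^ (3 + 1) = 625 by norm_num, h, zero_dvd_iff, sub_eq_zero] at h5
  rw [show 1250 = 625 * 2 from rfl, show 250 = 125 * 2 from rfl, pow_mul, pow_mul,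
    show (1 - y) ^ 625 = (1 - y ^ 5) ^ 125 from h5]

namespace PowerSeries

variable (R : Type*) [CommRing R]

def subringXPow (d : ℕ) : Subring R⟦X⟧ where
  carrier := {f | ∀ i, ¬ d ∣ i → coeff i f = 0}
  mul_mem' {f g} hf hg i hi := by
    refine (coeff_mul i f g).trans (sum_eq_zero fun p hp => ?_)
    rw [HasAntidiagonal.mem_antidiagonal] at hp
    by_cases h : d ∣ p.1
    · rw [hg p.2 fun h' => hi (hp ▸ dvd_add h h'), mul_zero]
    · rw [hf p.1 h, zero_mul]
  one_mem' i hi := by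
    rw [coeff_one, if_neg]
    rintro rfl
    exact hi (dvd_zero d)
  add_mem' {f g} hf hg i hi := by rw [map_add, hf i hi, hg i hi, add_zero]
  zero_mem' i _ := map_zero _
  neg_mem' {f} hf i hi := by rw [map_neg, hf i hi, neg_zero]

variable {R}

theorem X_pow_mem_subringXPow {d k : ℕ} (h : d ∣ k) : (X ^ k : R⟦X⟧) ∈ subringXPow R d :=
  fun i hi => by rw [coeff_X_pow, if_neg (by rintro rfl; exact hi h)]

theorem coeff_mem_of_forall_coeff_mul_mem (I : Ideal R) {d : ℕ} {S : Set ℕ} {A : R⟦X⟧}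
    (h : ∀ m, m % d ∈ S →
      ∃ E ∈ subringXPow R d, constantCoeff E = 1 ∧ coeff m (E * A) ∈ I) :
    ∀ m, m % d ∈ S → coeff m A ∈ I := by
  intro m
  induction m using Nat.strong_induction_on with
  | _ m ih =>
  intro hm
  obtain ⟨E, hE, hE0, hEA⟩ := h m hm
  have h0m : ((0, m) : ℕ × ℕ) ∈ antidiagonal m := by simp
  rw [coeff_mul, ← add_sum_erase _ _ h0m, coeff_zero_eq_constantCoeff_apply, hE0, one_mul] at hEA
  refine (I.add_mem_iff_left (I.sum_mem fun p hp => ?_)).1 hEA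
  obtain ⟨hne, hp⟩ := mem_erase.1 hp
  rw [HasAntidiagonal.mem_antidiagonal] at hp
  by_cases hd : d ∣ p.1
  · have hp1 : p.1 ≠ 0 := fun h0 => hne (Prod.ext h0 (by simp [← hp, h0]))
    obtain ⟨k, hk⟩ := hd
    refine I.mul_mem_left _ (ih p.2 (by omega) ?_)
    rwa [← hp, hk, Nat.mul_add_mod] at hm
  · rw [hE p.1 hd, zero_mul]
    exact I.zero_mem

theorem mk_span_X_pow_eq_iff {n : ℕ} {f g : R⟦X⟧} :
    Ideal.Quotient.mk (Ideal.span {X ^ n}) f = Ideal.Quotient.mk _ g ↔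
      ∀ m < n, coeff m f = coeff m g := by
  rw [Ideal.Quotient.eq, Ideal.mem_span_singleton, X_pow_dvd_iff]
  simp only [map_sub, sub_eq_zero]

theorem map_prod_one_sub_X_pow_pow_1250 {S : Type*} [CommRing S] (f : R →+* S)
    (h : (625 : S) = 0) (s : Finset ℕ) :
    map f (∏ n ∈ s, (1 - X ^ n) ^ 1250) = map f (∏ n ∈ s, (1 - X ^ (5 * n)) ^ 250) := by
  have h' : (625 : S⟦X⟧) = 0 := by rw [← map_ofNat C 625, h, map_zero]
  simp only [map_prod, map_pow, map_sub, map_one, map_X]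
  exact prod_congr rfl fun n _ => by rw [one_sub_pow_1250 h', ← pow_mul, mul_comm]

theorem map_coeff_eq_coeff_mul_of_truncated {S : Type*} [CommRing S] (f : R →+* S)
    {A B F G C D : R⟦X⟧} {N : ℕ}
    (hA : ∀ m ≤ N, coeff m (A * F) = coeff m 1)
    (hB : ∀ m ≤ N, coeff m (B * F * C) = coeff m (G * D))
    (hC : IsUnit (constantCoeff C)) (hD : map f D = map f C) :
    ∀ m ≤ N, f (coeff m B) = f (coeff m (G * A)) := by
  -- In `S⟦X⟧ ⧸ (X ^ (N + 1))` the truncated identities become equations and `C` a unit.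
  let φ : R⟦X⟧ →+* S⟦X⟧ ⧸ Ideal.span {(X : S⟦X⟧) ^ (N + 1)} :=
    (Ideal.Quotient.mk _).comp (map f)
  have hφ : ∀ {p q : R⟦X⟧}, φ p = φ q ↔ ∀ m ≤ N, f (coeff m p) = f (coeff m q) := by
    intro p q
    simp only [φ, RingHom.comp_apply, mk_span_X_pow_eq_iff, coeff_map, Nat.lt_succ_iff]
  have hA' : φ A * φ F = 1 := by
    rw [← map_mul, ← map_one φ, hφ]
    exact fun m hm => congrArg f (hA m hm)
  have hB' : φ B * φ F * φ C = φ G * φ C := by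
    have := hφ.2 fun m hm => congrArg f (hB m hm)
    rwa [map_mul, map_mul, map_mul, show φ D = φ C from congrArg (Ideal.Quotient.mk _) hD] at this
  have hBF : φ B * φ F = φ G := ((isUnit_iff_constantCoeff.2 hC).map φ).mul_left_inj.1 hB'
  refine hφ.1 ?_
  rw [map_mul]
  linear_combination (-φ B) * hA' + φ A * hBF

end PowerSeries

/-- Let `r(n)` be defined by
`∑ r(n) qⁿ = q^{41} · ∏ 1/((1-q^{3n})(1-qⁿ)³) · ∏ (1-q^{45n})^{13}(1-q^{135n})³ ·
∏ (1-qⁿ)^{1250}/(1-q^{5n})^{250}` and let `a(n)` be defined by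
`∑ a(n) qⁿ = ∏ 1/((1-q^{3n})(1-qⁿ)³)` (all encoded coefficientwise via truncated
products).  If `r(m) ≡ 0 (mod 625)` whenever `m ≡ 9, 18, 27, 36 (mod 45)`, then
`a(m) ≡ 0 (mod 625)` whenever `m ≡ 13, 22, 31, 40 (mod 45)`. -/
theorem stmt_8 (r a : ℕ → ℤ)
    (ha : ∀ N : ℕ, ∀ m ≤ N,
      coeff m (PowerSeries.mk a *
        ∏ n ∈ Finset.Icc 1 N, ((1 - X ^ (3 * n)) * (1 - X ^ n) ^ 3))
        = coeff m (1 : PowerSeries ℤ))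
    (hr : ∀ N : ℕ, ∀ m ≤ N,
      coeff m (PowerSeries.mk r *
        (∏ n ∈ Finset.Icc 1 N, ((1 - X ^ (3 * n)) * (1 - X ^ n) ^ 3)) *
        ∏ n ∈ Finset.Icc 1 N, (1 - X ^ (5 * n)) ^ 250)
        = coeff m ((X : PowerSeries ℤ) ^ 41 *
            (∏ n ∈ Finset.Icc 1 N, ((1 - X ^ (45 * n)) ^ 13 * (1 - X ^ (135 * n)) ^ 3)) *
            ∏ n ∈ Finset.Icc 1 N, (1 - X ^ n) ^ 1250))
    (hrdvd : ∀ m : ℕ, (m % 45 = 9 ∨ m % 45 = 18 ∨ m % 45 = 27 ∨ m % 45 = 36) →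
      (625 : ℤ) ∣ r m) :
    ∀ m : ℕ, (m % 45 = 13 ∨ m % 45 = 22 ∨ m % 45 = 31 ∨ m % 45 = 40) →
      (625 : ℤ) ∣ a m := by
  set E : ℕ → ℤ⟦X⟧ := fun N => ∏ n ∈ Icc 1 N, ((1 - X ^ (45 * n)) ^ 13 * (1 - X ^ (135 * n)) ^ 3)
  have hE : ∀ N, E N ∈ subringXPow ℤ 45 := fun N =>
    Subring.prod_mem _ fun n _ => mul_mem
      (pow_mem (sub_mem (one_mem _) (X_pow_mem_subringXPow (dvd_mul_right 45 n))) _)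
      (pow_mem (sub_mem (one_mem _) (X_pow_mem_subringXPow ⟨3 * n, by ring⟩)) _)
  have hE0 : ∀ N, constantCoeff (E N) = 1 := fun N =>
    (map_prod constantCoeff _ _).trans (prod_eq_one fun n hn => by
      simp [Nat.one_le_iff_ne_zero.1 (mem_Icc.1 hn).1])
  have hC : ∀ N, IsUnit (constantCoeff (∏ n ∈ Icc 1 N, (1 - X ^ (5 * n)) ^ 250 : ℤ⟦X⟧)) :=
    fun N => by
      rw [map_prod, prod_eq_one fun n hn => by simp [Nat.one_le_iff_ne_zero.1 (mem_Icc.1 hn).1]]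
      exact isUnit_one
  have h625 : ∀ x : ℤ, (x : ZMod 625) = 0 ↔ 625 ∣ x := fun x => by
    exact_mod_cast ZMod.intCast_zmod_eq_zero_iff_dvd x 625
  have hclass : ∀ m, m % 45 ∈ ({13, 22, 31, 40} : Set ℕ) → ∃ E' ∈ subringXPow ℤ 45,
      constantCoeff E' = 1 ∧
        coeff m (E' * PowerSeries.mk a) ∈ RingHom.ker (Int.castRingHom (ZMod 625)) := by
    intro m hm
    refine ⟨E (m + 41), hE _, hE0 _, ?_⟩
    rw [RingHom.mem_ker, ← coeff_X_pow_mul _ 41, ← mul_assoc,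
      ← map_coeff_eq_coeff_mul_of_truncated _ (ha _) (hr _) (hC _)
        (map_prod_one_sub_X_pow_pow_1250 _ rfl _) _ le_rfl, coeff_mk, eq_intCast, h625]
    exact hrdvd _ (by simp only [Set.mem_insert_iff, Set.mem_singleton_iff] at hm; omega)
  intro m hm
  have hm' : m % 45 ∈ ({13, 22, 31, 40} : Set ℕ) := by
    simp only [Set.mem_insert_iff, Set.mem_singleton_iff]; omega
  simpa [h625] using coeff_mem_of_forall_coeff_mul_mem _ hclass m hm'
end
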